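/- In oriented percolation on ℤ^d × ℤ₊, for vertices o, v, x: the event {o ⇒ v} ∩ {o → x} (where o ⇒ v means o is doubly connected to v) is contained in the union over vertices u of the triple disjoint occurrence { o → u → v } ∘ { o → v } ∘ { u → x }. -/

import Mathlib

open MeasureTheory
open scoped ENNReal

/-- Space-time vertices of oriented percolation on `ℤ^d × ℤ`. -/
abbrev Vert (d : ℕ) := (Fin d → ℤ) × ℤ
/-- Oriented bonds. -/
abbrev Bond (d : ℕ) := Vert d × Vert d
/-- Bond configurations. -/
abbrev Config (d : ℕ) := Bond d → Bool

variable {d : ℕ}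

/-- The bond `b` is occupied in `ω`. -/
def Occ (ω : Config d) (b : Bond d) : Prop := ω b = true

/-- `Conn ω u x`: `u → x`, i.e. there is a path of occupied oriented bonds from `u` to `x`. -/
inductive Conn (ω : Config d) : Vert d → Vert d → Prop
  | refl (v : Vert d) : Conn ω v v
  | step {u v w : Vert d} : Occ ω (u, v) → Conn ω v w → Conn ω u w

/-- The connection event `{u → x}`. -/
def connEvent (u x : Vert d) : Set (Config d) := {ω | Conn ω u x}

/-- The event `{b → x}`: `b` is occupied and its top endpoint is connected to `x`. -/
def bondConnEvent (b : Bond d) (x : Vert d) : Set (Config d) :=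
  {ω | Occ ω b ∧ Conn ω b.2 x}

/-- `E` occurs on the bond set `B` in configuration `ω`. -/
def OccursOn (E : Set (Config d)) (B : Set (Bond d)) (ω : Config d) : Prop :=
  ∀ ω' : Config d, (∀ b ∈ B, ω' b = ω b) → ω' ∈ E

/-- Disjoint occurrence `E₁ ∘ E₂`. -/
def DisjOcc (E₁ E₂ : Set (Config d)) : Set (Config d) :=
  {ω | ∃ B₁ B₂ : Set (Bond d), Disjoint B₁ B₂ ∧ OccursOn E₁ B₁ ω ∧ OccursOn E₂ B₂ ω}

/-- Triple disjoint occurrence `E₁ ∘ E₂ ∘ E₃`. -/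
def DisjOcc3 (E₁ E₂ E₃ : Set (Config d)) : Set (Config d) :=
  {ω | ∃ B₁ B₂ B₃ : Set (Bond d), Disjoint B₁ B₂ ∧ Disjoint B₁ B₃ ∧ Disjoint B₂ B₃ ∧
    OccursOn E₁ B₁ ω ∧ OccursOn E₂ B₂ ω ∧ OccursOn E₃ B₃ ω}

/-- The double-connection event `{u ⇒ v}`: two bond-disjoint occupied paths from `u` to `v`. -/
def DoubleConn (u v : Vert d) : Set (Config d) := DisjOcc (connEvent u v) (connEvent u v)

/-- Configuration with the status of bond `b` set to `val`. -/
def flipBond (ω : Config d) (b : Bond d) (val : Bool) : Config d :=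
  fun b' => if b' = b then val else ω b'

/-- `b ∈ piv(v, x)`: `b` is pivotal for `{v → x}` in `ω`. -/
def Pivotal (ω : Config d) (b : Bond d) (v x : Vert d) : Prop :=
  Conn (flipBond ω b true) v x ∧ ¬ Conn (flipBond ω b false) v x

/-- Connection avoiding the bond `b`. -/
inductive ConnAvoid (ω : Config d) (b : Bond d) : Vert d → Vert d → Prop
  | refl (v : Vert d) : ConnAvoid ω b v v
  | step {u v w : Vert d} : (u, v) ≠ b → Occ ω (u, v) → ConnAvoid ω b v w →
      ConnAvoid ω b u w

/-- `C̃^b(y)`: vertices reachable from `y` without using the bond `b`. -/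
def tilC (ω : Config d) (b : Bond d) (y : Vert d) : Set (Vert d) :=
  {x | ConnAvoid ω b y x}

/-- The lace-expansion event `E(b, x; C̃^b(y))`: `b → x` with `x ∈ C̃^b(y)` and no pivotal
bond for `{b̄ → x}` has its bottom endpoint in `C̃^b(y)`. -/
def Eevent (b : Bond d) (x y : Vert d) : Set (Config d) :=
  {ω | Occ ω b ∧ Conn ω b.2 x ∧ x ∈ tilC ω b y ∧
    ∀ b' : Bond d, Pivotal ω b' b.2 x → b'.1 ∉ tilC ω b y}

/-! Take two bond-disjoint occupied `o → v` paths and let `S` be the set of vertices lying on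
them. An occupied path `o → x` starts in `S`; let `u` be the last vertex of `S` it visits. The
path from `u` on uses only bonds whose top lies outside `S`, hence none of the two paths' bonds,
while `u` splits the path through it into `o → u → v`. -/

namespace Conn

variable {ω ω' : Config d} {a b c : Vert d}

theorem trans (hab : Conn ω a b) (hbc : Conn ω b c) : Conn ω a c := by
  induction hab with
  | refl => exact hbc
  | step he _ ih => exact .step he (ih hbc)

theorem mono (hω : ∀ e, Occ ω e → Occ ω' e) (h : Conn ω a b) : Conn ω' a b := by
  induction h with
  | refl => exact .refl _
  | step he _ ih => exact .step (hω _ he) ih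

end Conn

open Classical in
noncomputable def Config.restrict (ω : Config d) (B : Set (Bond d)) : Config d :=
  fun e => decide (e ∈ B) && ω e

@[simp]
theorem occ_restrict {ω : Config d} {B : Set (Bond d)} {e : Bond d} :
    Occ (ω.restrict B) e ↔ e ∈ B ∧ Occ ω e := by
  simp [Config.restrict, Occ]

theorem occursOn_connEvent_iff {ω : Config d} {B : Set (Bond d)} {a b : Vert d} :
    OccursOn (connEvent a b) B ω ↔ Conn (ω.restrict B) a b := by
  refine ⟨fun h => h _ fun e he => by simp [Config.restrict, he], fun h ω' hω' => ?_⟩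
  exact h.mono fun e he => (hω' e (occ_restrict.1 he).1).trans (occ_restrict.1 he).2

def verticesBetween (ω : Config d) (a b : Vert d) : Set (Vert d) :=
  {w | Conn ω a w ∧ Conn ω w b}

theorem Conn.restrict_inter_of_verticesBetween_subset {ω : Config d} {B : Set (Bond d)}
    {S : Set (Vert d)} {o v a b : Vert d} (hS : verticesBetween (ω.restrict B) o v ⊆ S)
    (h : Conn (ω.restrict B) a b) (hoa : Conn (ω.restrict B) o a)
    (hbv : Conn (ω.restrict B) b v) :
    Conn (ω.restrict (B ∩ {e | e.2 ∈ S})) a b := by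
  induction h with
  | refl => exact .refl _
  | @step a m b he hmb ih =>
    have hom : Conn (ω.restrict B) o m := hoa.trans (.step he (.refl _))
    have hmS : m ∈ S := hS ⟨hom, hmb.trans hbv⟩
    exact .step (occ_restrict.2 ⟨⟨(occ_restrict.1 he).1, hmS⟩, (occ_restrict.1 he).2⟩)
      (ih hom hbv)

theorem Conn.exists_last_mem {ω : Config d} {S : Set (Vert d)} {a b : Vert d}
    (h : Conn ω a b) (ha : a ∈ S) :
    ∃ u ∈ S, Conn (ω.restrict {e | e.2 ∉ S}) u b := by
  suffices Conn (ω.restrict {e | e.2 ∉ S}) a b ∨ ∃ u ∈ S, Conn (ω.restrict {e | e.2 ∉ S}) u b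
    from this.elim (fun h => ⟨a, ha, h⟩) id
  clear ha
  induction h with
  | refl => exact .inl (.refl _)
  | @step a m b he _ ih =>
    by_cases hm : m ∈ S
    · exact .inr (ih.elim (fun h => ⟨m, hm, h⟩) id)
    · exact ih.imp_left (.step (occ_restrict.2 ⟨hm, he⟩))

theorem mem_disjOcc3_of_mem_verticesBetween {ω : Config d} {B₁ B₂ : Set (Bond d)}
    {S : Set (Vert d)} {o u v x : Vert d} (hB : Disjoint B₁ B₂)
    (hS₁ : verticesBetween (ω.restrict B₁) o v ⊆ S)
    (hS₂ : verticesBetween (ω.restrict B₂) o v ⊆ S)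
    (hu : u ∈ verticesBetween (ω.restrict B₁) o v) (hov : Conn (ω.restrict B₂) o v)
    (hux : Conn (ω.restrict {e | e.2 ∉ S}) u x) :
    ω ∈ DisjOcc3 (connEvent o u ∩ connEvent u v) (connEvent o v) (connEvent u x) := by
  obtain ⟨hou, huv⟩ := hu
  refine ⟨B₁ ∩ {e | e.2 ∈ S}, B₂ ∩ {e | e.2 ∈ S}, {e | e.2 ∉ S},
    hB.mono Set.inter_subset_left Set.inter_subset_left,
    Set.disjoint_left.2 fun e he he' => he' he.2, Set.disjoint_left.2 fun e he he' => he' he.2,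
    fun ω' hω' => ⟨?_, ?_⟩, ?_, occursOn_connEvent_iff.2 hux⟩
  · exact occursOn_connEvent_iff.2
      (hou.restrict_inter_of_verticesBetween_subset hS₁ (.refl o) huv) ω' hω'
  · exact occursOn_connEvent_iff.2
      (huv.restrict_inter_of_verticesBetween_subset hS₁ hou (.refl v)) ω' hω'
  · exact occursOn_connEvent_iff.2
      (hov.restrict_inter_of_verticesBetween_subset hS₂ (.refl o) (.refl v))

/-- Inclusion (dbellsup):
`{o ⇒ v} ∩ {o → x} ⊆ ⋃_u {o → u → v} ∘ {o → v} ∘ {u → x}`. -/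
theorem stmt5 {d : ℕ} (o v x : Vert d) :
    DoubleConn o v ∩ connEvent o x ⊆
      ⋃ u : Vert d,
        DisjOcc3 (connEvent o u ∩ connEvent u v) (connEvent o v) (connEvent u x) := by
  rintro ω ⟨⟨B₁, B₂, hB, h₁, h₂⟩, hox⟩
  rw [occursOn_connEvent_iff] at h₁ h₂
  set S := verticesBetween (ω.restrict B₁) o v ∪ verticesBetween (ω.restrict B₂) o v
  obtain ⟨u, huS, hux⟩ := Conn.exists_last_mem (S := S) hox (.inl ⟨.refl o, h₁⟩)
  refine Set.mem_iUnion.2 ⟨u, ?_⟩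
  rcases huS with hu | hu
  · exact mem_disjOcc3_of_mem_verticesBetween hB Set.subset_union_left Set.subset_union_right
      hu h₂ hux
  · exact mem_disjOcc3_of_mem_verticesBetween hB.symm Set.subset_union_right
      Set.subset_union_left hu h₁ hux
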